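/- arXiv:2010.06033 — 3 statements merged into one kernel-verified Lean document; each statement's English description precedes it below -/
import Mathlib

section
/- For an m×n matrix polynomial P(λ) = Σ_{j=0}^k λ^j P_j of grade k over a field F, and invertible 2×2 matrices A = [[a,b],[c,d]] and B = [[a',b'],[c',d']] over F, the Möbius transformations satisfy the composition law M_B[M_A[P]] = M_{AB}[P], where both sides are regarded as matrix polynomials of grade k. -/
open Polynomial Matrix

/-- The Möbius transformation of a scalar polynomial `p`, regarded as having grade `k`,
induced by the 2×2 matrix `A = [[a,b],[c,d]]`:
`M_A[p](λ) = Σ_{j=0}^k p_j (aλ+b)^j (cλ+d)^{k-j}`. -/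
noncomputable def mobiusPoly {F : Type*} [Field F] (A : Matrix (Fin 2) (Fin 2) F)
    (k : ℕ) (p : Polynomial F) : Polynomial F :=
  ∑ j ∈ Finset.range (k + 1),
    Polynomial.C (p.coeff j) * (Polynomial.C (A 0 0) * Polynomial.X + Polynomial.C (A 0 1)) ^ j *
      (Polynomial.C (A 1 0) * Polynomial.X + Polynomial.C (A 1 1)) ^ (k - j)

/-- The Möbius transformation of a matrix polynomial (entrywise). -/
noncomputable def mobius {F : Type*} [Field F] {m n : Type*}
    (A : Matrix (Fin 2) (Fin 2) F) (k : ℕ) (P : Matrix m n (Polynomial F)) :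
    Matrix m n (Polynomial F) :=
  Matrix.of fun i j => mobiusPoly A k (P i j)

private lemma mobiusPoly_natDegree_le {F : Type*} [Field F] (A : Matrix (Fin 2) (Fin 2) F)
    (k : ℕ) (p : Polynomial F) : (mobiusPoly A k p).natDegree ≤ k := by
  refine Polynomial.natDegree_sum_le_of_forall_le _ _ fun j hj => ?_
  rw [Finset.mem_range, Nat.lt_succ_iff] at hj
  have h1 : ((C (A 0 0) * X + C (A 0 1) : Polynomial F) ^ j).natDegree ≤ j :=
    le_trans (natDegree_pow_le) (by
      have := natDegree_linear_le (a := A 0 0) (b := A 0 1)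
      calc j * (C (A 0 0) * X + C (A 0 1) : Polynomial F).natDegree ≤ j * 1 :=
        Nat.mul_le_mul_left _ this
      _ = j := by omega)
  have h2 : ((C (A 1 0) * X + C (A 1 1) : Polynomial F) ^ (k - j)).natDegree ≤ k - j :=
    le_trans (natDegree_pow_le) (by
      have := natDegree_linear_le (a := A 1 0) (b := A 1 1)
      calc (k - j) * (C (A 1 0) * X + C (A 1 1) : Polynomial F).natDegree ≤ (k - j) * 1 :=
        Nat.mul_le_mul_left _ this
      _ = k - j := by omega)
  calc (C (p.coeff j) * (C (A 0 0) * X + C (A 0 1)) ^ j *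
        (C (A 1 0) * X + C (A 1 1)) ^ (k - j) : Polynomial F).natDegree
      ≤ (C (p.coeff j) * (C (A 0 0) * X + C (A 0 1)) ^ j : Polynomial F).natDegree
        + ((C (A 1 0) * X + C (A 1 1) : Polynomial F) ^ (k - j)).natDegree := natDegree_mul_le
    _ ≤ ((C (p.coeff j) : Polynomial F).natDegree
        + ((C (A 0 0) * X + C (A 0 1) : Polynomial F) ^ j).natDegree) + (k - j) := by
        exact Nat.add_le_add natDegree_mul_le h2
    _ ≤ (0 + j) + (k - j) := by
        exact Nat.add_le_add_right (Nat.add_le_add (le_of_eq (natDegree_C _)) h1) _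
    _ ≤ k := by omega

private lemma sum_eq_pow_mul_eval₂ {F K : Type*} [Field F] [Field K] (φ : F →+* K)
    (k : ℕ) (u v : K) (hv : v ≠ 0) (q : Polynomial F) (hq : q.natDegree ≤ k) :
    ∑ i ∈ Finset.range (k + 1), φ (q.coeff i) * u ^ i * v ^ (k - i)
      = v ^ k * Polynomial.eval₂ φ (u / v) q := by
  rw [Polynomial.eval₂_eq_sum_range' φ (Nat.lt_succ_of_le hq), Finset.mul_sum]
  refine Finset.sum_congr rfl fun i hi => ?_
  rw [Finset.mem_range, Nat.lt_succ_iff] at hi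
  rw [div_pow, pow_sub₀ v hv hi]
  field_simp

private lemma step {F K : Type*} [Field F] [Field K] (φ : F →+* K)
    (k : ℕ) (u v : K) (hv : v ≠ 0) (A : Matrix (Fin 2) (Fin 2) F) (p : Polynomial F) :
    ∑ i ∈ Finset.range (k + 1), φ ((mobiusPoly A k p).coeff i) * u ^ i * v ^ (k - i)
      = ∑ j ∈ Finset.range (k + 1), φ (p.coeff j) * (φ (A 0 0) * u + φ (A 0 1) * v) ^ j *
          (φ (A 1 0) * u + φ (A 1 1) * v) ^ (k - j) := by
  rw [sum_eq_pow_mul_eval₂ φ k u v hv _ (mobiusPoly_natDegree_le A k p)]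
  rw [mobiusPoly, Polynomial.eval₂_finset_sum, Finset.mul_sum]
  refine Finset.sum_congr rfl fun j hj => ?_
  rw [Finset.mem_range, Nat.lt_succ_iff] at hj
  simp only [eval₂_mul, eval₂_pow, eval₂_add, eval₂_C, eval₂_X]
  have hsplit : (v : K) ^ k = v ^ j * v ^ (k - j) := by rw [← pow_add]; congr 1; omega
  rw [hsplit]
  have e1 : v ^ j * (φ (A 0 0) * (u / v) + φ (A 0 1)) ^ j
      = (φ (A 0 0) * u + φ (A 0 1) * v) ^ j := by
    rw [← mul_pow]; congr 1; field_simp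
  have e2 : v ^ (k - j) * (φ (A 1 0) * (u / v) + φ (A 1 1)) ^ (k - j)
      = (φ (A 1 0) * u + φ (A 1 1) * v) ^ (k - j) := by
    rw [← mul_pow]; congr 1; field_simp
  calc v ^ j * v ^ (k - j) * (φ (p.coeff j) * (φ (A 0 0) * (u / v) + φ (A 0 1)) ^ j *
        (φ (A 1 0) * (u / v) + φ (A 1 1)) ^ (k - j))
      = φ (p.coeff j) * (v ^ j * (φ (A 0 0) * (u / v) + φ (A 0 1)) ^ j) *
        (v ^ (k - j) * (φ (A 1 0) * (u / v) + φ (A 1 1)) ^ (k - j)) := by ring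
    _ = _ := by rw [e1, e2]

private lemma mobiusPoly_comp {F : Type*} [Field F] (k : ℕ)
    (A B : Matrix (Fin 2) (Fin 2) F) (hB : IsUnit B.det) (p : Polynomial F) :
    mobiusPoly B k (mobiusPoly A k p) = mobiusPoly (A * B) k p := by
  apply IsFractionRing.injective (Polynomial F) (RatFunc F)
  set φ : F →+* RatFunc F := (algebraMap (Polynomial F) (RatFunc F)).comp Polynomial.C with hφ
  have hV : algebraMap (Polynomial F) (RatFunc F) (C (B 1 0) * X + C (B 1 1)) ≠ 0 := by
    intro h
    have h0 : (C (B 1 0) * X + C (B 1 1) : Polynomial F) = 0 :=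
      (map_eq_zero_iff _ (IsFractionRing.injective _ _)).mp h
    have h10 : B 1 0 = 0 := by
      have := congrArg (fun q => Polynomial.coeff q 1) h0
      simpa using this
    have h11 : B 1 1 = 0 := by
      have := congrArg (fun q => Polynomial.coeff q 0) h0
      simpa using this
    rw [Matrix.det_fin_two, h10, h11] at hB
    simp at hB
  have push : ∀ (M : Matrix (Fin 2) (Fin 2) F) (q : Polynomial F),
      algebraMap (Polynomial F) (RatFunc F) (mobiusPoly M k q)
        = ∑ i ∈ Finset.range (k + 1),
          φ (q.coeff i) * (algebraMap (Polynomial F) (RatFunc F) (C (M 0 0) * X + C (M 0 1))) ^ i *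
            (algebraMap (Polynomial F) (RatFunc F) (C (M 1 0) * X + C (M 1 1))) ^ (k - i) := by
    intro M q
    simp [mobiusPoly, map_sum, _root_.map_mul, map_pow, hφ]
  rw [push, push]
  rw [step φ k _ _ hV A p]
  refine Finset.sum_congr rfl fun j hj => ?_
  simp only [hφ, RingHom.comp_apply, Matrix.mul_apply, Fin.sum_univ_two, _root_.map_add,
    _root_.map_mul]
  ring

/-- Composition law for Möbius transformations: `M_B[M_A[P]] = M_{AB}[P]`. -/
theorem mobius_comp {F : Type*} [Field F] {m n : Type*} (k : ℕ)
    (A B : Matrix (Fin 2) (Fin 2) F) (hA : IsUnit A.det) (hB : IsUnit B.det)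
    (P : Matrix m n (Polynomial F)) (hP : ∀ i j, (P i j).natDegree ≤ k) :
    mobius B k (mobius A k P) = mobius (A * B) k P := by
  refine Matrix.ext fun i j => ?_
  exact mobiusPoly_comp k A B hB (P i j)
end

section
/- Let P(λ) and Q(λ) be matrix polynomials over a field F of grades k₁ and k₂ respectively, with sizes so that the product P(λ)Q(λ) is defined, and let A ∈ GL(2,F). Then M_A[PQ] = M_A[P]·M_A[Q], where P(λ)Q(λ) is regarded as a matrix polynomial of grade k₁+k₂. -/
open Polynomial Matrix

lemma mobiusPoly_ratfunc {F : Type*} [Field F] (A : Matrix (Fin 2) (Fin 2) F)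
    (hv : (Polynomial.C (A 1 0) * Polynomial.X + Polynomial.C (A 1 1)) ≠ 0)
    (k : ℕ) (q : Polynomial F) (hq : q.natDegree ≤ k) :
    algebraMap (Polynomial F) (RatFunc F) (mobiusPoly A k q) =
      (algebraMap (Polynomial F) (RatFunc F)
          (Polynomial.C (A 1 0) * Polynomial.X + Polynomial.C (A 1 1))) ^ k *
        Polynomial.aeval
          (algebraMap (Polynomial F) (RatFunc F)
              (Polynomial.C (A 0 0) * Polynomial.X + Polynomial.C (A 0 1)) /
            algebraMap (Polynomial F) (RatFunc F)
              (Polynomial.C (A 1 0) * Polynomial.X + Polynomial.C (A 1 1))) q := by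
  set u := Polynomial.C (A 0 0) * Polynomial.X + Polynomial.C (A 0 1)
  set v := Polynomial.C (A 1 0) * Polynomial.X + Polynomial.C (A 1 1)
  set U := algebraMap (Polynomial F) (RatFunc F) u
  set V := algebraMap (Polynomial F) (RatFunc F) v
  have hV : V ≠ 0 := by
    simpa [V, map_ne_zero_iff _ (RatFunc.algebraMap_injective F)] using hv
  rw [Polynomial.aeval_eq_sum_range' (lt_of_le_of_lt hq (Nat.lt_succ_self k))]
  rw [mobiusPoly, map_sum, Finset.mul_sum]
  refine Finset.sum_congr rfl fun j hj => ?_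
  rw [Finset.mem_range, Nat.lt_succ_iff] at hj
  rw [_root_.map_mul, _root_.map_mul, map_pow, map_pow, div_pow, Algebra.smul_def]
  have hC : algebraMap (Polynomial F) (RatFunc F) (Polynomial.C (q.coeff j)) =
      algebraMap F (RatFunc F) (q.coeff j) := by
    simp [IsScalarTower.algebraMap_apply F (Polynomial F) (RatFunc F)]
  rw [hC, pow_sub₀ V hV hj, div_eq_mul_inv]
  ring


lemma mobiusPoly_mul {F : Type*} [Field F] (A : Matrix (Fin 2) (Fin 2) F)
    (hv : (Polynomial.C (A 1 0) * Polynomial.X + Polynomial.C (A 1 1)) ≠ 0)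
    (k₁ k₂ : ℕ) (p q : Polynomial F) (hp : p.natDegree ≤ k₁) (hq : q.natDegree ≤ k₂) :
    mobiusPoly A (k₁ + k₂) (p * q) = mobiusPoly A k₁ p * mobiusPoly A k₂ q := by
  apply RatFunc.algebraMap_injective F
  have hpq : (p * q).natDegree ≤ k₁ + k₂ :=
    le_trans Polynomial.natDegree_mul_le (add_le_add hp hq)
  rw [_root_.map_mul, mobiusPoly_ratfunc A hv _ _ hpq, mobiusPoly_ratfunc A hv _ _ hp,
    mobiusPoly_ratfunc A hv _ _ hq, _root_.map_mul, pow_add]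
  ring

lemma mobiusPoly_sum {F : Type*} [Field F] (A : Matrix (Fin 2) (Fin 2) F) (k : ℕ)
    {ι : Type*} (s : Finset ι) (f : ι → Polynomial F) :
    mobiusPoly A k (∑ i ∈ s, f i) = ∑ i ∈ s, mobiusPoly A k (f i) := by
  unfold mobiusPoly
  rw [Finset.sum_comm]
  refine Finset.sum_congr rfl fun j _ => ?_
  rw [← Finset.sum_mul, ← Finset.sum_mul, ← map_sum]
  simp [Polynomial.finset_sum_coeff]

theorem mobius_mul' {F : Type*} [Field F] {m n p : ℕ} (k₁ k₂ : ℕ)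
    (A : Matrix (Fin 2) (Fin 2) F) (hA : IsUnit A.det)
    (P : Matrix (Fin m) (Fin n) (Polynomial F)) (Q : Matrix (Fin n) (Fin p) (Polynomial F))
    (hP : ∀ i j, (P i j).natDegree ≤ k₁) (hQ : ∀ i j, (Q i j).natDegree ≤ k₂) :
    mobius A (k₁ + k₂) (P * Q) = mobius A k₁ P * mobius A k₂ Q := by
  have hv : (Polynomial.C (A 1 0) * Polynomial.X + Polynomial.C (A 1 1)) ≠ 0 := by
    intro h
    have h1 : A 1 0 = 0 := by
      have := congrArg (fun r => Polynomial.coeff r 1) h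
      simpa using this
    have h0 : A 1 1 = 0 := by
      have := congrArg (fun r => Polynomial.coeff r 0) h
      simpa [h1] using this
    rw [Matrix.det_fin_two, h1, h0] at hA
    simp at hA
  funext i j
  simp only [mobius, Matrix.mul_apply, Matrix.of_apply]
  rw [mobiusPoly_sum]
  exact Finset.sum_congr rfl fun l _ => mobiusPoly_mul A hv k₁ k₂ _ _ (hP i l) (hQ l j)


/-- Möbius transformations are multiplicative:
`M_A[PQ] = M_A[P] · M_A[Q]`, where `PQ` is regarded as having grade `k₁ + k₂`. -/
theorem mobius_mul {F : Type*} [Field F] {m n p : ℕ} (k₁ k₂ : ℕ)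
    (A : Matrix (Fin 2) (Fin 2) F) (hA : IsUnit A.det)
    (P : Matrix (Fin m) (Fin n) (Polynomial F)) (Q : Matrix (Fin n) (Fin p) (Polynomial F))
    (hP : ∀ i j, (P i j).natDegree ≤ k₁) (hQ : ∀ i j, (Q i j).natDegree ≤ k₂) :
    mobius A (k₁ + k₂) (P * Q) = mobius A k₁ P * mobius A k₂ Q := by
  exact mobius_mul' k₁ k₂ A hA P Q hP hQ
end

section
/- Let P(λ) = Σ_{j=0}^4 λ^j P_j be an n×n ⊤-palindromic quartic matrix polynomial (P_jᵀ = P_{4−j} for all j, in particular P₀ = P₄ᵀ, P₁ = P₃ᵀ, P₂ = P₂ᵀ). Then the 2n×2n quadratic matrix polynomial L(λ) = [[P₁ + λ(P₂ − I − P₀P₄) + λ²P₃, I + λ²P₄],[P₀ + λ²I, −λI]] is ⊤-palindromic of grade 2, i.e., Lᵀ(λ) = rev₂ L(λ). -/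
open Polynomial Matrix

/-- The `2`-reversal of a scalar polynomial regarded as having grade `2`. -/
noncomputable def revPoly {F : Type*} [Field F] (k : ℕ) (p : Polynomial F) : Polynomial F :=
  ∑ j ∈ Finset.range (k + 1), Polynomial.C (p.coeff (k - j)) * Polynomial.X ^ j

/-- The `2n × 2n` quadratic matrix polynomial
`L(λ) = [[P₁ + λ(P₂ − I − P₀P₄) + λ²P₃, I + λ²P₄],[P₀ + λ²I, −λI]]`. -/
noncomputable def palQuad {F : Type*} [Field F] {n : ℕ}
    (P₀ P₁ P₂ P₃ P₄ : Matrix (Fin n) (Fin n) F) :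
    Matrix (Fin n ⊕ Fin n) (Fin n ⊕ Fin n) (Polynomial F) :=
  Matrix.fromBlocks
    (P₁.map Polynomial.C
      + (Polynomial.X : Polynomial F) • (P₂.map Polynomial.C - 1 - P₀.map Polynomial.C * P₄.map Polynomial.C)
      + ((Polynomial.X : Polynomial F) ^ 2) • P₃.map Polynomial.C)
    (1 + ((Polynomial.X : Polynomial F) ^ 2) • P₄.map Polynomial.C)
    (P₀.map Polynomial.C
      + ((Polynomial.X : Polynomial F) ^ 2) • (1 : Matrix (Fin n) (Fin n) (Polynomial F)))
    (-((Polynomial.X : Polynomial F) • (1 : Matrix (Fin n) (Fin n) (Polynomial F))))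

lemma rev2 {F : Type*} [Field F] (p : Polynomial F) :
    revPoly 2 p = Polynomial.C (p.coeff 2) + Polynomial.C (p.coeff 1) * Polynomial.X
      + Polynomial.C (p.coeff 0) * Polynomial.X ^ 2 := by
  simp [revPoly, Finset.sum_range_succ]

lemma rev2' {F : Type*} [Field F] (a b c : F) :
    revPoly 2 (Polynomial.C a + Polynomial.X * Polynomial.C b
      + Polynomial.X ^ 2 * Polynomial.C c)
    = Polynomial.C c + Polynomial.X * Polynomial.C b + Polynomial.X ^ 2 * Polynomial.C a := by
  rw [rev2]
  simp [coeff_X_mul]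

lemma map_rev {F : Type*} [Field F] {n : ℕ} (P Q R : Matrix (Fin n) (Fin n) F) :
    (P.map Polynomial.C + (Polynomial.X : Polynomial F) • Q.map Polynomial.C
      + ((Polynomial.X : Polynomial F) ^ 2) • R.map Polynomial.C).map (revPoly 2)
    = R.map Polynomial.C + (Polynomial.X : Polynomial F) • Q.map Polynomial.C
      + ((Polynomial.X : Polynomial F) ^ 2) • P.map Polynomial.C := by
  refine Matrix.ext fun i j => ?_
  simp only [Matrix.map_apply, Matrix.add_apply, Matrix.smul_apply, smul_eq_mul]
  rw [rev2']

/-- If `P(λ) = Σ_{j=0}^4 λ^j P_j` is ⊤-palindromic (`P_jᵀ = P_{4-j}`), then the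
quadratification `L(λ)` is ⊤-palindromic of grade 2: `Lᵀ(λ) = rev₂ L(λ)`. -/
theorem palQuad_palindromic {F : Type*} [Field F] {n : ℕ}
    (P₀ P₁ P₂ P₃ P₄ : Matrix (Fin n) (Fin n) F)
    (h₀ : P₀ᵀ = P₄) (h₁ : P₁ᵀ = P₃) (h₂ : P₂ᵀ = P₂) :
    (palQuad P₀ P₁ P₂ P₃ P₄)ᵀ = (palQuad P₀ P₁ P₂ P₃ P₄).map (revPoly 2) := by
  have h₄ : P₄ᵀ = P₀ := by rw [← h₀, transpose_transpose]
  have h₃ : P₃ᵀ = P₁ := by rw [← h₁, transpose_transpose]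
  have h1 : ((1 : Matrix (Fin n) (Fin n) F)).map (Polynomial.C : F →+* Polynomial F)
      = (1 : Matrix (Fin n) (Fin n) (Polynomial F)) := by simp
  have h0 : ((0 : Matrix (Fin n) (Fin n) F)).map (Polynomial.C : F →+* Polynomial F)
      = (0 : Matrix (Fin n) (Fin n) (Polynomial F)) := by simp
  have hC : P₀.map (Polynomial.C : F →+* Polynomial F) * P₄.map Polynomial.C
      = (P₀ * P₄).map Polynomial.C := (Matrix.map_mul).symm
  have hM : (P₂ : Matrix (Fin n) (Fin n) F) - 1 - P₀ * P₄
      = ((P₂ - 1 - P₀ * P₄)ᵀ) := by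
    simp [Matrix.transpose_sub, Matrix.transpose_mul, h₂, h₀, h₄]
  have hsub : ∀ A B : Matrix (Fin n) (Fin n) F,
      (A - B).map (Polynomial.C : F →+* Polynomial F) = A.map Polynomial.C - B.map Polynomial.C :=
    fun A B => Matrix.map_sub _ (fun a b => by simp) _ _
  unfold palQuad
  rw [Matrix.fromBlocks_transpose, Matrix.fromBlocks_map, Matrix.fromBlocks_inj]
  refine ⟨?_, ?_, ?_, ?_⟩
  · rw [hC, ← h1, ← hsub, ← hsub, map_rev, Matrix.transpose_add, Matrix.transpose_add,
      Matrix.transpose_smul, Matrix.transpose_smul, ← Matrix.transpose_map,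
      ← Matrix.transpose_map, ← Matrix.transpose_map, h₁, h₃, ← hM]
  · have hB : (1 : Matrix (Fin n) (Fin n) (Polynomial F))
        + ((Polynomial.X : Polynomial F) ^ 2) • P₄.map Polynomial.C
        = ((1 : Matrix (Fin n) (Fin n) F)).map Polynomial.C
          + (Polynomial.X : Polynomial F) • ((0 : Matrix (Fin n) (Fin n) F)).map Polynomial.C
          + ((Polynomial.X : Polynomial F) ^ 2) • P₄.map Polynomial.C := by
      rw [h1, h0]; simp
    rw [hB, map_rev, h0, h1, Matrix.transpose_add, Matrix.transpose_smul,
      ← Matrix.transpose_map, h₀, Matrix.transpose_one]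
    simp
  · have hB : P₀.map (Polynomial.C : F →+* Polynomial F)
        + ((Polynomial.X : Polynomial F) ^ 2) • (1 : Matrix (Fin n) (Fin n) (Polynomial F))
        = P₀.map Polynomial.C
          + (Polynomial.X : Polynomial F) • ((0 : Matrix (Fin n) (Fin n) F)).map Polynomial.C
          + ((Polynomial.X : Polynomial F) ^ 2) • ((1 : Matrix (Fin n) (Fin n) F)).map Polynomial.C := by
      rw [h1, h0]; simp
    rw [hB, map_rev, h0, h1, Matrix.transpose_add, Matrix.transpose_smul,
      ← Matrix.transpose_map, h₄, Matrix.transpose_one]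
    simp
  · have hD : -((Polynomial.X : Polynomial F) • (1 : Matrix (Fin n) (Fin n) (Polynomial F)))
        = ((0 : Matrix (Fin n) (Fin n) F)).map Polynomial.C
          + (Polynomial.X : Polynomial F) • ((-1 : Matrix (Fin n) (Fin n) F)).map Polynomial.C
          + ((Polynomial.X : Polynomial F) ^ 2) • ((0 : Matrix (Fin n) (Fin n) F)).map Polynomial.C := by
      have : ((-1 : Matrix (Fin n) (Fin n) F)).map (Polynomial.C : F →+* Polynomial F)
          = -(1 : Matrix (Fin n) (Fin n) (Polynomial F)) := by
        refine Matrix.ext fun i j => ?_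
        simp [Matrix.one_apply, Matrix.neg_apply, apply_ite (Polynomial.C : F → Polynomial F)]
      rw [h0, this]; simp
    rw [hD, map_rev, Matrix.transpose_add, Matrix.transpose_add, Matrix.transpose_smul,
      Matrix.transpose_smul]
    simp [← Matrix.transpose_map]
end
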